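/- Let X be a finite set with |X| ≥ 3 and let λ, ρ : X → X be commuting bijections; define r : X × X → X × X by r(x,y) = (λ(y), ρ(x)). If (X,r) is a simple solution, then the subgroup of Sym(X) generated by λ and ρ acts primitively on X, i.e., it acts transitively and preserves no partition of X other than the partition into singletons and the partition with one block. -/
import Mathlib


/-- The map `r × id` on `X × X × X`. -/
def r12 {X : Type} (r : X × X → X × X) : X × X × X → X × X × X :=
  fun p => ((r (p.1, p.2.1)).1, (r (p.1, p.2.1)).2, p.2.2)

/-- The map `id × r` on `X × X × X`. -/
def r23 {X : Type} (r : X × X → X × X) : X × X × X → X × X × X :=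
  fun p => (p.1, r p.2)

/-- `r` satisfies the braid equation, i.e. `(X, r)` is a set-theoretic solution of the
Yang--Baxter equation. -/
def IsBraided {X : Type} (r : X × X → X × X) : Prop :=
  (r12 r) ∘ (r23 r) ∘ (r12 r) = (r23 r) ∘ (r12 r) ∘ (r23 r)

/-- The map `λ_x`, where `r (x, y) = (λ_x y, ρ_y x)`. -/
def lambdaMap {X : Type} (r : X × X → X × X) (x : X) : X → X := fun y => (r (x, y)).1

/-- The map `ρ_y`, where `r (x, y) = (λ_x y, ρ_y x)`. -/
def rhoMap {X : Type} (r : X × X → X × X) (y : X) : X → X := fun x => (r (x, y)).2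

/-- A solution is non-degenerate if all `λ_x` and all `ρ_y` are bijective. -/
def Nondegenerate {X : Type} (r : X × X → X × X) : Prop :=
  (∀ x, Function.Bijective (lambdaMap r x)) ∧ (∀ y, Function.Bijective (rhoMap r y))

/-- A homomorphism of solutions `f : (X, r) → (Y, s)`: `(f × f) ∘ r = s ∘ (f × f)`. -/
def IsSolHom {X Y : Type} (r : X × X → X × X) (s : Y × Y → Y × Y) (f : X → Y) : Prop :=
  ∀ x y : X, Prod.map f f (r (x, y)) = s (f x, f y)

/-- A solution `(X, r)` is simple if `|X| ≥ 2` and every epimorphism of solutions from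
`(X, r)` is either bijective or has image of cardinality `1`. -/
def SimpleSolution (X : Type) (r : X × X → X × X) : Prop :=
  2 ≤ Nat.card X ∧
  ∀ (Y : Type) (s : Y × Y → Y × Y) (f : X → Y),
    IsBraided s → Function.Surjective f → IsSolHom r s f →
    Function.Bijective f ∨ Nat.card Y = 1

/-- The derived map `σ_y (x) = λ_y (ρ_{λ_x⁻¹ y} (x))` of a non-degenerate solution. -/
noncomputable def sigmaMap {X : Type} [Nonempty X] (r : X × X → X × X) (y x : X) : X :=
  lambdaMap r y (rhoMap r (Function.invFun (lambdaMap r x) y) x)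

/-- The diagonal map `q (x) = λ_x⁻¹ (x)` of a non-degenerate solution. -/
noncomputable def diagMap {X : Type} [Nonempty X] (r : X × X → X × X) (x : X) : X :=
  Function.invFun (lambdaMap r x) x

/-- A non-degenerate solution is irretractable if `λ_x = λ_y` and `ρ_x = ρ_y` imply `x = y`. -/
def Irretractable {X : Type} (r : X × X → X × X) : Prop :=
  ∀ x y : X, lambdaMap r x = lambdaMap r y → rhoMap r x = rhoMap r y → x = y

/-- A solution is decomposable if `X` is a disjoint union of two non-empty invariant subsets. -/
def Decomposable {X : Type} (r : X × X → X × X) : Prop :=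
  ∃ Y Z : Set X, Y.Nonempty ∧ Z.Nonempty ∧ Disjoint Y Z ∧ Y ∪ Z = Set.univ ∧
    (∀ x y, x ∈ Y → y ∈ Y → (r (x, y)).1 ∈ Y ∧ (r (x, y)).2 ∈ Y) ∧
    (∀ x y, x ∈ Z → y ∈ Z → (r (x, y)).1 ∈ Z ∧ (r (x, y)).2 ∈ Z)

lemma braided_of_comm {Y : Type} (L R : Y → Y) (h : ∀ a, L (R a) = R (L a)) :
    IsBraided (fun p : Y × Y => (L p.2, R p.1)) := by
  funext p
  obtain ⟨a, b, c⟩ := p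
  simp only [r12, r23, Function.comp_apply]
  exact Prod.ext rfl (Prod.ext (h b).symm rfl)

/-- If a Lyubashenko solution on a finite set with at least 3 elements is
simple, then the group generated by `λ` and `ρ` acts primitively on `X`: it acts
transitively, and every invariant equivalence relation (i.e. invariant partition) is either
the relation of equality (partition into singletons) or the total relation (one block). -/
theorem stmt_2 {X : Type} [Fintype X] (hX : 3 ≤ Fintype.card X)
    (lam rho : Equiv.Perm X) (hcomm : lam * rho = rho * lam)
    (r : X × X → X × X) (hr : ∀ x y : X, r (x, y) = (lam y, rho x))
    (hsimple : SimpleSolution X r) :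
    (∀ x y : X, ∃ g ∈ Subgroup.closure ({lam, rho} : Set (Equiv.Perm X)), g x = y) ∧
    ∀ e : Setoid X,
      (∀ g ∈ Subgroup.closure ({lam, rho} : Set (Equiv.Perm X)),
        ∀ x y : X, e.r x y → e.r (g x) (g y)) →
      (∀ x y : X, e.r x y → x = y) ∨ (∀ x y : X, e.r x y) := by
  classical
  have hmemlam : lam ∈ Subgroup.closure ({lam, rho} : Set (Equiv.Perm X)) :=
    Subgroup.subset_closure (Set.mem_insert _ _)
  have hmemrho : rho ∈ Subgroup.closure ({lam, rho} : Set (Equiv.Perm X)) :=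
    Subgroup.subset_closure (Set.mem_insert_of_mem _ rfl)
  have hcomm' : ∀ x, lam (rho x) = rho (lam x) := fun x => by
    have := congrArg (fun g : Equiv.Perm X => g x) hcomm
    simpa [Equiv.Perm.mul_apply] using this
  have part2 : ∀ e : Setoid X,
      (∀ g ∈ Subgroup.closure ({lam, rho} : Set (Equiv.Perm X)),
        ∀ x y : X, e.r x y → e.r (g x) (g y)) →
      (∀ x y : X, e.r x y → x = y) ∨ (∀ x y : X, e.r x y) := by
    intro e he
    have hlam : ∀ x y, e.r x y → e.r (lam x) (lam y) := he lam hmemlam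
    have hrho : ∀ x y, e.r x y → e.r (rho x) (rho y) := he rho hmemrho
    let lamQ : Quotient e → Quotient e := Quotient.map lam (fun a b hab => hlam a b hab)
    let rhoQ : Quotient e → Quotient e := Quotient.map rho (fun a b hab => hrho a b hab)
    let s : Quotient e × Quotient e → Quotient e × Quotient e := fun p => (lamQ p.2, rhoQ p.1)
    have hbr : IsBraided s := by
      refine braided_of_comm lamQ rhoQ ?_
      intro a
      induction a using Quotient.ind with
      | _ x =>
        show Quotient.map lam _ (Quotient.map rho _ (Quotient.mk e x)) =
          Quotient.map rho _ (Quotient.map lam _ (Quotient.mk e x))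
        simp only [Quotient.map_mk]
        exact congrArg (Quotient.mk e) (hcomm' x)
    have hsurj : Function.Surjective (Quotient.mk e) :=
      fun y => ⟨y.out, Quotient.out_eq y⟩
    have hhom : IsSolHom r s (Quotient.mk e) := by
      intro x y
      rw [hr]
      show (Quotient.mk e (lam y), Quotient.mk e (rho x)) =
        (lamQ (Quotient.mk e y), rhoQ (Quotient.mk e x))
      simp only [lamQ, rhoQ, Quotient.map_mk]
    rcases hsimple.2 (Quotient e) s (Quotient.mk e) hbr hsurj hhom with hbij | hcard
    · left
      intro x y hxy
      exact hbij.1 (Quotient.sound hxy)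
    · right
      intro x y
      have : Subsingleton (Quotient e) := (Nat.card_eq_one_iff_unique.mp hcard).1
      exact Quotient.exact (Subsingleton.elim _ _)
  refine ⟨?_, part2⟩
  let e : Setoid X :=
    ⟨fun x y => ∃ g ∈ Subgroup.closure ({lam, rho} : Set (Equiv.Perm X)), g x = y,
      ⟨fun x => ⟨1, one_mem _, rfl⟩,
       fun {x y} h => by
         obtain ⟨g, hg, hgx⟩ := h
         exact ⟨g⁻¹, inv_mem hg, by rw [← hgx]; simp⟩,
       fun {x y z} h1 h2 => by
         obtain ⟨g, hg, hgx⟩ := h1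
         obtain ⟨k, hk, hky⟩ := h2
         exact ⟨k * g, mul_mem hk hg, by simp [Equiv.Perm.mul_apply, hgx, hky]⟩⟩⟩
  have he : ∀ g ∈ Subgroup.closure ({lam, rho} : Set (Equiv.Perm X)),
      ∀ x y : X, e.r x y → e.r (g x) (g y) := by
    intro g hg x y h
    obtain ⟨k, hk, hkxy⟩ := h
    exact ⟨g * k * g⁻¹, mul_mem (mul_mem hg hk) (inv_mem hg),
      by simp [Equiv.Perm.mul_apply, hkxy]⟩
  rcases part2 e he with heq | htot
  · exfalso
    have hlam1 : ∀ x, lam x = x := fun x => (heq x (lam x) ⟨lam, hmemlam, rfl⟩).symm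
    have hrho1 : ∀ x, rho x = x := fun x => (heq x (rho x) ⟨rho, hmemrho, rfl⟩).symm
    obtain ⟨a, b, hab⟩ := Fintype.exists_pair_of_one_lt_card (α := X) (by omega)
    let f : X → Bool := fun x => decide (x = b)
    have hsurj : Function.Surjective f := by
      intro c
      cases c
      · exact ⟨a, by simp [f, hab]⟩
      · exact ⟨b, by simp [f]⟩
    let s : Bool × Bool → Bool × Bool := fun p => (p.2, p.1)
    have hbr : IsBraided s := braided_of_comm (fun x => x) (fun x => x) (fun _ => rfl)
    have hhom : IsSolHom r s f := by
      intro x y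
      rw [hr, hlam1, hrho1]
      rfl
    rcases hsimple.2 Bool s f hbr hsurj hhom with hbij | hcard
    · have h1 : Nat.card X = Nat.card Bool := Nat.card_eq_of_bijective f hbij
      have h2 : Nat.card Bool = 2 := by simp [Nat.card_eq_fintype_card]
      have h3 : Nat.card X = Fintype.card X := Nat.card_eq_fintype_card
      omega
    · simp [Nat.card_eq_fintype_card] at hcard
  · exact fun x y => htot x y
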